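/- Let K be a commutative field with at least 4 elements, let a₁, a₂ ∈ K, ρ ∈ K, and set α = (ρ−2)a₁² + a₂, β = (1−2ρ)a₁, γ = ρ. Then for all (u₁, u₂) ∈ K² the following are equivalent: (i) u₂ = α + β·u₁ + (γ+1)·u₁²; (ii) either (u₁, u₂) = (a₁, a₂), or u₁ ≠ a₁ and δ(P(a₁,a₂), P(u₁,u₂)) = ρ. That is, the extended circle E(A,ρ) with midpoint A = P(a₁,a₂) and radius ρ equals the set of affine points of the curve R_{α,β,γ}; moreover (α,β,γ) is the only triple in K³ with this property. -/
import Mathlib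


/-- The (non-symmetric) distance function on the affine part of the Cayley
surface, in the parameters `(u₁,u₂)`. -/
def cayleyDist {K : Type*} [Field K] (A B : K × K) : K :=
  (2*A.1^2 - A.2 - A.1*B.1 + B.2 - B.1^2) / (A.1 - B.1)^2

theorem stmt_15 {K : Type*} [Field K] (hK : (4 : Cardinal) ≤ Cardinal.mk K)
    (a₁ a₂ ρ : K) :
    (∀ u₁ u₂ : K,
      u₂ = ((ρ-2)*a₁^2 + a₂) + (1-2*ρ)*a₁*u₁ + (ρ+1)*u₁^2 ↔
        ((u₁, u₂) = (a₁, a₂) ∨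
          (u₁ ≠ a₁ ∧ cayleyDist (a₁, a₂) (u₁, u₂) = ρ))) ∧
    (∀ α' β' γ' : K,
      (∀ u₁ u₂ : K,
        u₂ = α' + β'*u₁ + (γ'+1)*u₁^2 ↔
          ((u₁, u₂) = (a₁, a₂) ∨
            (u₁ ≠ a₁ ∧ cayleyDist (a₁, a₂) (u₁, u₂) = ρ))) →
      (α', β', γ') = ((ρ-2)*a₁^2 + a₂, (1-2*ρ)*a₁, ρ)) := by
  have main : ∀ u₁ u₂ : K,
      u₂ = ((ρ-2)*a₁^2 + a₂) + (1-2*ρ)*a₁*u₁ + (ρ+1)*u₁^2 ↔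
        ((u₁, u₂) = (a₁, a₂) ∨
          (u₁ ≠ a₁ ∧ cayleyDist (a₁, a₂) (u₁, u₂) = ρ)) := by
    intro u₁ u₂
    by_cases h : u₁ = a₁
    · subst h
      simp only [Prod.mk.injEq, ne_eq, not_true_eq_false, false_and, or_false, true_and]
      constructor
      · intro h'; linear_combination h'
      · intro h'; subst h'; ring
    · have hne : (a₁ - u₁) ^ 2 ≠ 0 := pow_ne_zero _ (sub_ne_zero.mpr (Ne.symm h))
      simp only [Prod.mk.injEq, h, false_and, false_or, ne_eq, not_false_eq_true, true_and,
        cayleyDist, div_eq_iff hne]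
      constructor
      · intro h'; subst h'; ring
      · intro h'; linear_combination h'
  refine ⟨main, ?_⟩
  intro α' β' γ' hcurve
  have key : ∀ t : K, α' + β'*t + (γ'+1)*t^2
      = ((ρ-2)*a₁^2 + a₂) + (1-2*ρ)*a₁*t + (ρ+1)*t^2 := by
    intro t
    exact ((main t _).mpr ((hcurve t _).mp rfl))
  -- get three distinct elements
  have h3 : (3 : Cardinal) ≤ Cardinal.mk K := le_trans (by norm_num) hK
  have hnt : Nontrivial K := inferInstance
  obtain ⟨x, y, hxy⟩ := hnt
  obtain ⟨z, hzx, hzy⟩ := Cardinal.three_le h3 x y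
  set A := α' - ((ρ-2)*a₁^2 + a₂) with hA
  set B := β' - (1-2*ρ)*a₁ with hB
  set C := (γ'+1) - (ρ+1) with hC
  have e : ∀ t : K, A + B*t + C*t^2 = 0 := by
    intro t
    have := key t
    simp only [hA, hB, hC]
    ring_nf
    linear_combination this
  have hx := e x
  have hy := e y
  have hz := e z
  have hC0 : C = 0 := by
    have h1 : B + C*(x+y) = 0 := by
      have hd : x - y ≠ 0 := sub_ne_zero.mpr hxy
      apply mul_left_cancel₀ hd
      linear_combination hx - hy
    have h2 : B + C*(x+z) = 0 := by
      have hd : x - z ≠ 0 := sub_ne_zero.mpr (Ne.symm hzx)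
      apply mul_left_cancel₀ hd
      linear_combination hx - hz
    have hd : y - z ≠ 0 := sub_ne_zero.mpr (Ne.symm hzy)
    apply mul_left_cancel₀ hd
    linear_combination h1 - h2
  have hB0 : B = 0 := by
    have hd : x - y ≠ 0 := sub_ne_zero.mpr hxy
    apply mul_left_cancel₀ hd
    linear_combination hx - hy - (x^2 - y^2) * hC0
  have hA0 : A = 0 := by
    linear_combination hx - x * hB0 - x^2 * hC0
  have hα : α' = (ρ-2)*a₁^2 + a₂ := by linear_combination hA0
  have hβ : β' = (1-2*ρ)*a₁ := by linear_combination hB0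
  have hγ : γ' = ρ := by linear_combination hC0
  simp [hα, hβ, hγ]
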